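/- arXiv:2407.15245 — 3 statements merged into one kernel-verified Lean document; each statement's English description precedes it below -/
import Mathlib

section
/- For λ > 0, t > t₀, and x, y ∈ ℝ, the value (1/(2π)) · (1/cosh(√λ(t−t₀))) · exp(−(√λ(x+y)²/4)·tanh(√λ(t−t₀))) · ∫_ℝ exp(−(ξ²/√λ)·tanh(√λ(t−t₀)) + i(x−y)ξ) dξ equals λ^{1/4}/√(2π sinh(2√λ(t−t₀))) · exp(−(√λ/2)(x²+y²)·cosh(2√λ(t−t₀))/sinh(2√λ(t−t₀)) + √λ·x·y/sinh(2√λ(t−t₀))). -/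
open Complex Real MeasureTheory

/-! The integral is the Fourier transform of a Gaussian, `√(π/a) · exp(-(x-y)²/(4a))` with
`a = tanh s / √λ` and `s = √λ (t - t₀)`. What remains is real algebra: since
`sinh 2s = 2 sinh s cosh s` and `cosh 2s = cosh² s + sinh² s`, the exponent
`-(√λ/4) ((x+y)² tanh s + (x-y)² coth s)` equals `-(√λ/2)(x²+y²) coth 2s + √λ x y / sinh 2s`. -/

theorem integral_cexp_neg_sq_mul_add_I_mul {a : ℝ} (ha : 0 < a) (b : ℝ) :
    ∫ ξ : ℝ, cexp (-((ξ ^ 2 * a : ℝ) : ℂ) + I * b * ξ) =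
      ((√(π / a) * Real.exp (-(b ^ 2 / (4 * a))) : ℝ) : ℂ) := by
  have h := fourierIntegral_gaussian (b := (a : ℂ)) (by simpa using ha) (b : ℂ)
  simp_rw [← Complex.exp_add] at h
  convert h using 1
  · congr 1 with ξ; push_cast; ring_nf
  · rw [Real.sqrt_eq_rpow, Complex.ofReal_mul, Complex.ofReal_cpow (by positivity)]
    push_cast; ring_nf

theorem Real.tanh_pos {x : ℝ} (hx : 0 < x) : 0 < Real.tanh x := by
  rw [Real.tanh_eq_sinh_div_cosh]
  exact div_pos (Real.sinh_pos_iff.2 hx) (Real.cosh_pos x)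

theorem mehler_prefactor_eq (μ : ℝ) {s : ℝ} (hs : 0 < s) :
    1 / (2 * π) * (1 / Real.cosh s) * √(π / (Real.tanh s / μ)) =
      √μ / √(2 * π * Real.sinh (2 * s)) := by
  have hsinh : 0 < Real.sinh s := Real.sinh_pos_iff.2 hs
  have hcosh : 0 < Real.cosh s := Real.cosh_pos s
  calc 1 / (2 * π) * (1 / Real.cosh s) * √(π / (Real.tanh s / μ))
      = √((1 / (2 * π * Real.cosh s)) ^ 2 * (π / (Real.tanh s / μ))) := by
        rw [Real.sqrt_mul (sq_nonneg _), Real.sqrt_sq (by positivity)]; ring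
    _ = √(μ / (2 * π * Real.sinh (2 * s))) := by
        rw [Real.tanh_eq_sinh_div_cosh, Real.sinh_two_mul]; field_simp
    _ = √μ / √(2 * π * Real.sinh (2 * s)) := Real.sqrt_div' μ (by positivity)

theorem mehler_exponent_eq (μ x y : ℝ) {s : ℝ} (hs : s ≠ 0) :
    -(μ * (x + y) ^ 2 / 4 * Real.tanh s) + -((x - y) ^ 2 / (4 * (Real.tanh s / μ))) =
      -(μ / 2) * (x ^ 2 + y ^ 2) * (Real.cosh (2 * s) / Real.sinh (2 * s)) +
        μ * x * y / Real.sinh (2 * s) := by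
  have hsinh : Real.sinh s ≠ 0 := Real.sinh_ne_zero.2 hs
  have hcosh : Real.cosh s ≠ 0 := (Real.cosh_pos s).ne'
  rw [Real.tanh_eq_sinh_div_cosh, Real.sinh_two_mul, Real.cosh_two_mul]
  field_simp
  linear_combination (8 * μ * x * y) * Real.cosh_sq s

theorem mehler_univariate_factor (lam t₀ t x y : ℝ) (hlam : 0 < lam) (ht : t₀ < t) :
    ((1 / (2 * Real.pi) : ℝ) : ℂ) *
      ((1 / Real.cosh (Real.sqrt lam * (t - t₀)) : ℝ) : ℂ) *
      Complex.exp (-((Real.sqrt lam * (x + y)^2 / 4 * Real.tanh (Real.sqrt lam * (t - t₀)) : ℝ) : ℂ)) *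
      (∫ ξ : ℝ, Complex.exp (-((ξ^2 / Real.sqrt lam * Real.tanh (Real.sqrt lam * (t - t₀)) : ℝ) : ℂ)
          + Complex.I * ((x - y : ℝ) : ℂ) * (ξ : ℂ))) =
    ((lam ^ ((1:ℝ)/4) / Real.sqrt (2 * Real.pi * Real.sinh (2 * Real.sqrt lam * (t - t₀))) : ℝ) : ℂ) *
      Complex.exp
        (((-(Real.sqrt lam / 2) * (x^2 + y^2) *
            (Real.cosh (2 * Real.sqrt lam * (t - t₀)) / Real.sinh (2 * Real.sqrt lam * (t - t₀)))
          + Real.sqrt lam * x * y / Real.sinh (2 * Real.sqrt lam * (t - t₀)) : ℝ) : ℂ)) := by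
  have hquart : lam ^ ((1 : ℝ) / 4) = √(√lam) := by
    rw [Real.sqrt_eq_rpow, Real.sqrt_eq_rpow, ← Real.rpow_mul hlam.le]; norm_num
  set μ := √lam
  set s := μ * (t - t₀)
  have hμ : 0 < μ := Real.sqrt_pos.2 hlam
  have hs : 0 < s := mul_pos hμ (sub_pos.2 ht)
  have h2s : 2 * μ * (t - t₀) = 2 * s := by ring
  have hξ : ∀ ξ : ℝ, ξ ^ 2 / μ * Real.tanh s = ξ ^ 2 * (Real.tanh s / μ) := fun ξ => by ring
  simp_rw [hξ, h2s, hquart]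
  rw [integral_cexp_neg_sq_mul_add_I_mul (div_pos (Real.tanh_pos hs) hμ) (x - y),
    ← mehler_prefactor_eq μ hs, ← mehler_exponent_eq μ x y hs.ne']
  push_cast [Complex.exp_add]
  ring
end

section
/- Suppose g(t, q₁, …, qₙ) = α(t)·exp(−Σ_{k=1}^n β_k(t) q_k) with α, β_k differentiable, α > 0. Then g satisfies the PDE ∂g/∂t = −(Σ q_k) g + Σ_k (λ_k q_k ∂²g/∂q_k² + λ_k ∂g/∂q_k) for all (q₁,…,qₙ) ∈ ℝⁿ if and only if for all k, β_k' = 1 − λ_k β_k², and α'/α = −Σ_k λ_k β_k. -/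
/-!
Both partial derivatives of the ansatz are multiples of it: `∂g/∂q_k = -β_k g` and
`∂²g/∂q_k² = β_k² g`, while `∂g/∂t = (α' - α Σ β_k' q_k) e^{-Σ β_k q_k}`. Dividing the PDE by the
positive factor `e^{-Σ β_k q_k}` leaves an affine function of `q` that must vanish identically,
with constant term `α' + α Σ λ_k β_k` and `q_k`-coefficient `α (1 - λ_k β_k² - β_k')`.
Evaluating at `q = 0` and at the basis vectors shows that all of these vanish.
-/

open Real

/-- Partial derivative of a function of (q₁,…,qₙ) in the k-th variable. -/
noncomputable def pderivQ {n : ℕ} (k : Fin n) (f : (Fin n → ℝ) → ℝ) (q : Fin n → ℝ) : ℝ :=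
  fderiv ℝ f q (Pi.single k 1)

open Finset

theorem forall_add_sum_mul_eq_zero_iff {R ι : Type*} [Semiring R] [Fintype ι] [DecidableEq ι]
    (c : R) (a : ι → R) :
    (∀ q : ι → R, c + ∑ k, a k * q k = 0) ↔ c = 0 ∧ ∀ k, a k = 0 := by
  constructor
  · intro h
    have hc : c = 0 := by simpa using h 0
    refine ⟨hc, fun k => ?_⟩
    simpa [hc, Pi.single_apply] using h (Pi.single k 1)
  · rintro ⟨rfl, ha⟩ q
    simp [ha]

section Ansatz

variable {n : ℕ}

theorem pderivQ_const_mul_exp_neg_sum (a : ℝ) (c : Fin n → ℝ) (k : Fin n) (q : Fin n → ℝ) :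
    pderivQ k (fun v => a * exp (-∑ j, c j * v j)) q = -c k * (a * exp (-∑ j, c j * q j)) := by
  let L : (Fin n → ℝ) →L[ℝ] ℝ := ∑ j, c j • ContinuousLinearMap.proj j
  have hL : ∀ v, L v = ∑ j, c j * v j := fun v => by simp [L]
  have hexp : HasFDerivAt (fun v => a * exp (-∑ j, c j * v j))
      (a • (exp (-∑ j, c j * q j) • -L)) q := by
    simp_rw [← hL]
    exact (L.hasFDerivAt.neg.exp).const_mul a
  simp only [pderivQ, hexp.fderiv, smul_apply, neg_apply,
    hL, Pi.single_apply, mul_ite, mul_one, mul_zero, sum_ite_eq', mem_univ, if_true, smul_eq_mul]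
  ring

theorem pderivQ_pderivQ_const_mul_exp_neg_sum (a : ℝ) (c : Fin n → ℝ) (k : Fin n)
    (q : Fin n → ℝ) :
    pderivQ k (pderivQ k (fun v => a * exp (-∑ j, c j * v j))) q
      = c k ^ 2 * (a * exp (-∑ j, c j * q j)) := by
  have h : pderivQ k (fun v => a * exp (-∑ j, c j * v j))
      = fun v => (-c k * a) * exp (-∑ j, c j * v j) := by
    funext v
    rw [pderivQ_const_mul_exp_neg_sum, mul_assoc]
  rw [h, pderivQ_const_mul_exp_neg_sum]
  ring

theorem hasDerivAt_mul_exp_neg_sum {α : ℝ → ℝ} {β : Fin n → ℝ → ℝ} {t : ℝ}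
    (hα : DifferentiableAt ℝ α t) (hβ : ∀ k, DifferentiableAt ℝ (β k) t) (q : Fin n → ℝ) :
    HasDerivAt (fun s => α s * exp (-∑ k, β k s * q k))
      ((deriv α t - α t * ∑ k, deriv (β k) t * q k) * exp (-∑ k, β k t * q k)) t := by
  have hsum : HasDerivAt (fun s => ∑ k, β k s * q k) (∑ k, deriv (β k) t * q k) t :=
    HasDerivAt.fun_sum fun k _ => (hβ k).hasDerivAt.mul_const (q k)
  exact (hα.hasDerivAt.fun_mul hsum.fun_neg.exp).congr_deriv (by ring)

theorem ansatz_pde_iff_add_sum_mul_eq_zero (lam : Fin n → ℝ) {α : ℝ → ℝ} {β : Fin n → ℝ → ℝ}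
    {t : ℝ}
    (hα : DifferentiableAt ℝ α t) (hβ : ∀ k, DifferentiableAt ℝ (β k) t) (q : Fin n → ℝ) :
    deriv (fun s => α s * exp (-∑ k, β k s * q k)) t =
        -(∑ k, q k) * (α t * exp (-∑ k, β k t * q k)) +
          ∑ k, (lam k * q k * pderivQ k (pderivQ k (fun v => α t * exp (-∑ k, β k t * v k))) q
            + lam k * pderivQ k (fun v => α t * exp (-∑ k, β k t * v k)) q) ↔
      (deriv α t + α t * ∑ k, lam k * β k t)
        + ∑ k, α t * (1 - lam k * β k t ^ 2 - deriv (β k) t) * q k = 0 := by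
  set E := exp (-∑ k, β k t * q k)
  rw [(hasDerivAt_mul_exp_neg_sum hα hβ q).deriv]
  simp only [pderivQ_pderivQ_const_mul_exp_neg_sum, pderivQ_const_mul_exp_neg_sum]
  rw [← sub_eq_zero]
  have hresidual : ((deriv α t - α t * ∑ k, deriv (β k) t * q k) * E -
      (-(∑ k, q k) * (α t * E) +
        ∑ k, (lam k * q k * (β k t ^ 2 * (α t * E)) + lam k * (-β k t * (α t * E)))))
      = ((deriv α t + α t * ∑ k, lam k * β k t)
        + ∑ k, α t * (1 - lam k * β k t ^ 2 - deriv (β k) t) * q k) * E := by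
    simp only [add_mul, mul_sum, sum_mul, sub_eq_add_neg, ← sum_neg_distrib, add_assoc,
      ← sum_add_distrib]
    congr 1
    exact sum_congr rfl fun k _ => by ring
  rw [hresidual, mul_eq_zero, or_iff_left (exp_pos _).ne']

end Ansatz

theorem separable_ansatz_characterization_general (n : ℕ) (lam : Fin n → ℝ)
    (α : ℝ → ℝ) (β : Fin n → ℝ → ℝ)
    (hα : Differentiable ℝ α) (hβ : ∀ k, Differentiable ℝ (β k))
    (hαpos : ∀ t, 0 < α t)
    (g : ℝ → (Fin n → ℝ) → ℝ)
    (hg : ∀ t q, g t q = α t * Real.exp (-∑ k, β k t * q k)) :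
    (∀ (t : ℝ) (q : Fin n → ℝ),
      deriv (fun s => g s q) t =
        -(∑ k, q k) * g t q +
          ∑ k, (lam k * q k * pderivQ k (pderivQ k (g t)) q + lam k * pderivQ k (g t) q)) ↔
    ((∀ k t, deriv (β k) t = 1 - lam k * (β k t)^2) ∧
      (∀ t, deriv α t / α t = -∑ k, lam k * β k t)) := by
  obtain rfl : g = fun t q => α t * exp (-∑ k, β k t * q k) := funext fun t => funext (hg t)
  have hα0 : ∀ t, α t ≠ 0 := fun t => (hαpos t).ne'
  simp only [ansatz_pde_iff_add_sum_mul_eq_zero lam (hα _) (fun k => hβ k _),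
    forall_add_sum_mul_eq_zero_iff, mul_eq_zero, hα0, false_or, sub_eq_zero, div_eq_iff (hα0 _)]
  rw [forall_and, and_comm]
  refine and_congr (forall_comm.trans (by simp only [eq_comm])) (forall_congr' fun t => ?_)
  rw [neg_mul, eq_neg_iff_add_eq_zero, mul_comm]

theorem separable_ansatz_characterization (n : ℕ) (lam : Fin n → ℝ)
    (hlam : ∀ k, 0 ≤ lam k)
    (α : ℝ → ℝ) (β : Fin n → ℝ → ℝ)
    (hα : Differentiable ℝ α) (hβ : ∀ k, Differentiable ℝ (β k))
    (hαpos : ∀ t, 0 < α t)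
    (g : ℝ → (Fin n → ℝ) → ℝ)
    (hg : ∀ t q, g t q = α t * Real.exp (-∑ k, β k t * q k)) :
    (∀ (t : ℝ) (q : Fin n → ℝ),
      deriv (fun s => g s q) t =
        -(∑ k, q k) * g t q +
          ∑ k, (lam k * q k * pderivQ k (pderivQ k (g t)) q + lam k * pderivQ k (g t) q)) ↔
    ((∀ k t, deriv (β k) t = 1 - lam k * (β k t)^2) ∧
      (∀ t, deriv α t / α t = -∑ k, lam k * β k t)) :=
  separable_ansatz_characterization_general n lam α β hα hβ hαpos g hg
end

section
/- As τ → 0⁺, the one-dimensional Mehler kernel κ_τ(x,y) = λ^{1/4}/√(2π sinh(2√λ τ)) · exp(−(√λ/2)(x²+y²) coth(2√λ τ) + √λ x y / sinh(2√λ τ)) satisfies: for every continuous bounded f : ℝ → ℝ and x ∈ ℝ, ∫_ℝ κ_τ(x,y) f(y) dy → f(x). -/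
open Real MeasureTheory Filter

/-- The one-dimensional Mehler kernel at elapsed time τ. -/
noncomputable def mehlerKernelτ (lam τ x y : ℝ) : ℝ :=
  lam ^ ((1:ℝ)/4) / Real.sqrt (2 * Real.pi * Real.sinh (2 * Real.sqrt lam * τ)) *
    Real.exp (-(Real.sqrt lam / 2) * (x^2 + y^2) *
        (Real.cosh (2 * Real.sqrt lam * τ) / Real.sinh (2 * Real.sqrt lam * τ))
      + Real.sqrt lam * x * y / Real.sinh (2 * Real.sqrt lam * τ))

/-!
Completing the square in `y` writes the kernel, for `τ > 0`, as a weight in `x` times the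
density of a normal law with mean `x / cosh θ` and variance `tanh θ / √λ`, where `θ = 2√λ τ`.
The weight tends to `1` as `τ → 0⁺`, and the normal laws concentrate at `x`; since such a law is
the image of the standard normal under `u ↦ m + √v u`, dominated convergence with the bound
`sup |f|` gives convergence of the `f`-averages to `f x`.
-/

open ProbabilityTheory Topology
open scoped NNReal

namespace ProbabilityTheory

lemma gaussianReal_eq_map_standard (m : ℝ) (v : ℝ≥0) :
    gaussianReal m v = (gaussianReal 0 1).map (fun u ↦ m + √(v : ℝ) * u) := by
  have hmap : (fun u ↦ m + √(v : ℝ) * u) = (m + ·) ∘ (√(v : ℝ) * ·) := rfl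
  rw [hmap, ← Measure.map_map (by fun_prop) (by fun_prop), gaussianReal_map_const_mul,
    gaussianReal_map_const_add]
  congr 1
  · ring
  · ext; simp

lemma tendsto_integral_gaussianReal {ι : Type*} {l : Filter ι} [l.IsCountablyGenerated]
    {f : ℝ → ℝ} (hf : Continuous f) {M : ℝ} (hM : ∀ y, |f y| ≤ M)
    {m : ι → ℝ} {v : ι → ℝ≥0} {x : ℝ} (hm : Tendsto m l (𝓝 x)) (hv : Tendsto v l (𝓝 0)) :
    Tendsto (fun i ↦ ∫ y, f y ∂gaussianReal (m i) (v i)) l (𝓝 (f x)) := by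
  have hstd : ∀ i, ∫ y, f y ∂gaussianReal (m i) (v i)
      = ∫ u, f (m i + √(v i : ℝ) * u) ∂gaussianReal 0 1 := fun i ↦ by
    rw [gaussianReal_eq_map_standard, integral_map (by fun_prop) hf.aestronglyMeasurable]
  simp_rw [hstd]
  have hlim : ∀ u : ℝ, Tendsto (fun i ↦ m i + √(v i : ℝ) * u) l (𝓝 x) := fun u ↦ by
    have hsqrt : Tendsto (fun i ↦ √(v i : ℝ)) l (𝓝 0) := by
      simpa using (NNReal.tendsto_coe.2 hv).sqrt
    simpa using hm.add (hsqrt.mul_const u)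
  simpa using tendsto_integral_filter_of_dominated_convergence (μ := gaussianReal 0 1)
    (fun _ ↦ M)
    (Eventually.of_forall fun _ ↦ (hf.comp (by fun_prop)).aestronglyMeasurable)
    (Eventually.of_forall fun _ ↦ Eventually.of_forall fun _ ↦ hM _) (integrable_const M)
    (Eventually.of_forall fun u ↦ (hf.tendsto x).comp (hlim u))

end ProbabilityTheory

lemma mehler_exponent_complete_sq {r s c : ℝ} (hs : 0 < s) (hc : 0 < c) (hcs : c ^ 2 - s ^ 2 = 1)
    (x y : ℝ) :
    -(r / 2) * (x ^ 2 + y ^ 2) * (c / s) + r * x * y / s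
      = -(r * s * x ^ 2 / (2 * c)) + -(y - x / c) ^ 2 / (2 * (s / (r * c))) := by
  field_simp
  linear_combination (-r * x ^ 2) * hcs

lemma sqrt_div_mul_exp_eq_mul_gaussianPDFReal {r θ : ℝ} (hr : 0 < r) (hθ : 0 < θ) (x y : ℝ) :
    √r / √(2 * π * sinh θ) * exp (-(r / 2) * (x ^ 2 + y ^ 2) * (cosh θ / sinh θ)
      + r * x * y / sinh θ)
      = exp (-(r * sinh θ * x ^ 2 / (2 * cosh θ))) / √(cosh θ) *
        gaussianPDFReal (x / cosh θ) (sinh θ / cosh θ / r).toNNReal y := by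
  have hs : 0 < sinh θ := sinh_pos_iff.mpr hθ
  have hc : 0 < cosh θ := cosh_pos θ
  have hvar : √(2 * π * (sinh θ / cosh θ / r)) = √(2 * π * sinh θ) / (√r * √(cosh θ)) := by
    rw [div_div, mul_comm (cosh θ), ← mul_div_assoc, sqrt_div' _ (by positivity), sqrt_mul hr.le]
  rw [gaussianPDFReal, Real.coe_toNNReal _ (by positivity), hvar, div_div, mul_comm (cosh θ),
    mehler_exponent_complete_sq hs hc (cosh_sq_sub_sinh_sq θ), exp_add]
  have : 0 < √(2 * π * sinh θ) := by positivity
  have : 0 < √(cosh θ) := by positivity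
  field_simp

noncomputable def mehlerMean (lam τ x : ℝ) : ℝ := x / cosh (2 * √lam * τ)

noncomputable def mehlerVariance (lam τ : ℝ) : ℝ≥0 :=
  (sinh (2 * √lam * τ) / cosh (2 * √lam * τ) / √lam).toNNReal

noncomputable def mehlerWeight (lam τ x : ℝ) : ℝ :=
  exp (-(√lam * sinh (2 * √lam * τ) * x ^ 2 / (2 * cosh (2 * √lam * τ)))) /
    √(cosh (2 * √lam * τ))

lemma mehlerKernelτ_eq_mul_gaussianPDFReal {lam τ : ℝ} (hlam : 0 < lam) (hτ : 0 < τ)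
    (x y : ℝ) :
    mehlerKernelτ lam τ x y
      = mehlerWeight lam τ x * gaussianPDFReal (mehlerMean lam τ x) (mehlerVariance lam τ) y := by
  have hquarter : lam ^ ((1 : ℝ) / 4) = √√lam := by
    rw [sqrt_eq_rpow, sqrt_eq_rpow, ← rpow_mul hlam.le]
    norm_num
  rw [mehlerKernelτ, hquarter,
    sqrt_div_mul_exp_eq_mul_gaussianPDFReal (sqrt_pos.2 hlam) (by positivity)]
  rfl

lemma mehlerVariance_ne_zero {lam τ : ℝ} (hlam : 0 < lam) (hτ : 0 < τ) :
    mehlerVariance lam τ ≠ 0 := by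
  have : 0 < sinh (2 * √lam * τ) := sinh_pos_iff.2 (by positivity)
  have : 0 < cosh (2 * √lam * τ) := cosh_pos _
  simp only [mehlerVariance, ne_eq, toNNReal_eq_zero, not_le]
  positivity

lemma integral_mehlerKernelτ_mul {lam τ : ℝ} (hlam : 0 < lam) (hτ : 0 < τ) (f : ℝ → ℝ)
    (x : ℝ) :
    ∫ y, mehlerKernelτ lam τ x y * f y
      = mehlerWeight lam τ x *
          ∫ y, f y ∂gaussianReal (mehlerMean lam τ x) (mehlerVariance lam τ) := by
  simp_rw [mehlerKernelτ_eq_mul_gaussianPDFReal hlam hτ, mul_assoc, integral_const_mul,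
    integral_gaussianReal_eq_integral_smul (mehlerVariance_ne_zero hlam hτ), smul_eq_mul]

lemma tendsto_mehlerWeight (lam x : ℝ) : Tendsto (fun τ ↦ mehlerWeight lam τ x) (𝓝 0) (𝓝 1) := by
  have hcont : Continuous fun τ ↦ mehlerWeight lam τ x := by
    unfold mehlerWeight
    refine Continuous.div ?_ (by fun_prop) fun τ ↦ (sqrt_pos.2 (cosh_pos _)).ne'
    exact continuous_exp.comp
      ((by fun_prop : Continuous _).div (by fun_prop) fun τ ↦ by positivity).neg
  simpa [mehlerWeight] using hcont.tendsto 0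

lemma tendsto_mehlerMean (lam x : ℝ) : Tendsto (fun τ ↦ mehlerMean lam τ x) (𝓝 0) (𝓝 x) := by
  have hcont : Continuous fun τ ↦ mehlerMean lam τ x :=
    continuous_const.div (by fun_prop) fun τ ↦ (cosh_pos _).ne'
  simpa [mehlerMean] using hcont.tendsto 0

lemma tendsto_mehlerVariance (lam : ℝ) : Tendsto (mehlerVariance lam) (𝓝 0) (𝓝 0) := by
  have hcont : Continuous (mehlerVariance lam) :=
    continuous_real_toNNReal.comp <| (continuous_sinh.comp (by fun_prop)).div
      (continuous_cosh.comp (by fun_prop)) (fun τ ↦ (cosh_pos _).ne') |>.div_const _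
  simpa [mehlerVariance] using hcont.tendsto 0

theorem mehlerKernel_tendsto_dirac (lam : ℝ) (hlam : 0 < lam)
    (f : ℝ → ℝ) (hf : Continuous f) (hbdd : ∃ M, ∀ y, |f y| ≤ M) (x : ℝ) :
    Tendsto (fun τ => ∫ y : ℝ, mehlerKernelτ lam τ x y * f y)
      (nhdsWithin 0 (Set.Ioi 0)) (nhds (f x)) := by
  obtain ⟨M, hM⟩ := hbdd
  have hlim := (tendsto_mehlerWeight lam x).mul (tendsto_integral_gaussianReal hf hM
    (tendsto_mehlerMean lam x) (tendsto_mehlerVariance lam))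
  rw [one_mul] at hlim
  refine (hlim.mono_left nhdsWithin_le_nhds).congr' ?_
  filter_upwards [self_mem_nhdsWithin] with τ hτ
  exact (integral_mehlerKernelτ_mul hlam hτ f x).symm
end
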